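/- (Persistence of a common FloodSet set.) Suppose the delivery pattern is consistent with the crash pattern. Let 1 ≤ m ≤ r and let W* be a finset of values such that every process p alive at the end of round m−1 satisfies W m p = W*. Then for every m' with m ≤ m' ≤ r, every process p alive at the end of round m'−1 satisfies W m' p = W*. -/

import Mathlib

open scoped Classical

/-- The FloodSet execution: `W 0 p = {init p}` and, for `t < r`,
`W (t+1) p = W t p ∪ ⋃ q, (if delivered t q p then W t q else ∅)`
(beyond round `r` the set is just carried along). -/
noncomputable def floodW {n r : ℕ} {V : Type} (init : Fin n → V)
    (delivered : Fin r → Fin n → Fin n → Prop) : ℕ → Fin n → Finset V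
  | 0, p => {init p}
  | t + 1, p =>
      if h : t < r then
        floodW init delivered t p ∪
          Finset.univ.biUnion fun q =>
            if delivered ⟨t, h⟩ q p then floodW init delivered t q else ∅
      else floodW init delivered t p

/-- Process `p` is alive at the end of round `t`. -/
def aliveAtEnd {n r : ℕ} (crash : Fin n → Option (Fin r)) (t : ℕ) (p : Fin n) : Prop :=
  crash p = none ∨ ∃ s : Fin r, crash p = some s ∧ t < s.val

/-- The delivery pattern is consistent with the crash pattern. -/
def consistentDel {n r : ℕ} (crash : Fin n → Option (Fin r))
    (delivered : Fin r → Fin n → Fin n → Prop) : Prop :=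
  (∀ (t : Fin r) (q p : Fin n),
      (crash q = none ∨ ∃ s : Fin r, crash q = some s ∧ t.val < s.val) → delivered t q p) ∧
  (∀ (t : Fin r) (q p : Fin n) (s : Fin r), crash q = some s → s.val < t.val →
      ¬ delivered t q p)

/-! A message received in a round `k ≥ m` comes from a process that had not crashed before
round `k`, hence (inductively) holds `W*`; since the receiver holds `W*` as well, the round adds
nothing to its set. -/

theorem floodW_succ {n r : ℕ} {V : Type} (init : Fin n → V)
    (delivered : Fin r → Fin n → Fin n → Prop) {t : ℕ} (ht : t < r) (p : Fin n) :
    floodW init delivered (t + 1) p = floodW init delivered t p ∪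
      Finset.univ.biUnion fun q =>
        if delivered ⟨t, ht⟩ q p then floodW init delivered t q else ∅ := by
  rw [floodW, dif_pos ht]

theorem floodW_succ_eq_self {n r : ℕ} {V : Type} (init : Fin n → V)
    (delivered : Fin r → Fin n → Fin n → Prop) {t : ℕ} (ht : t < r) (p : Fin n)
    (hsub : ∀ q, delivered ⟨t, ht⟩ q p →
      floodW init delivered t q ⊆ floodW init delivered t p) :
    floodW init delivered (t + 1) p = floodW init delivered t p := by
  rw [floodW_succ init delivered ht, Finset.union_eq_left]
  refine Finset.biUnion_subset.2 fun q _ => ?_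
  split_ifs with hd
  exacts [hsub q hd, Finset.empty_subset _]

theorem aliveAtEnd.mono {n r : ℕ} {crash : Fin n → Option (Fin r)} {t t' : ℕ} {p : Fin n}
    (htt' : t' ≤ t) : aliveAtEnd crash t p → aliveAtEnd crash t' p
  | .inl h => .inl h
  | .inr ⟨s, hs, hlt⟩ => .inr ⟨s, hs, htt'.trans_lt hlt⟩

theorem consistentDel.aliveAtEnd_of_delivered {n r : ℕ} {crash : Fin n → Option (Fin r)}
    {delivered : Fin r → Fin n → Fin n → Prop} (hcons : consistentDel crash delivered)
    {t : Fin r} {q p : Fin n} (ht : 0 < t.val) (hd : delivered t q p) :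
    aliveAtEnd crash (t.val - 1) q := by
  rcases hq : crash q with _ | s
  · exact .inl hq
  · refine .inr ⟨s, hq, ?_⟩
    by_contra! hle
    exact hcons.2 t q p s hq (by omega) hd

theorem stmt_7_general (n r : ℕ)
    (V : Type)
    (init : Fin n → V) (crash : Fin n → Option (Fin r))
    (delivered : Fin r → Fin n → Fin n → Prop)
    (hcons : consistentDel crash delivered)
    (m : ℕ) (hm1 : 1 ≤ m) (Wstar : Finset V)
    (hW : ∀ p : Fin n, aliveAtEnd crash (m - 1) p → floodW init delivered m p = Wstar) :
    ∀ m' : ℕ, m ≤ m' → m' ≤ r →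
      ∀ p : Fin n, aliveAtEnd crash (m' - 1) p → floodW init delivered m' p = Wstar := by
  intro m' hmm'
  induction m', hmm' using Nat.le_induction with
  | base => exact fun _ => hW
  | succ k hmk ih =>
    intro (hkr : k < r) p hp
    have hk : 0 < k := hm1.trans hmk
    have hp_prev : floodW init delivered k p = Wstar := ih hkr.le p (hp.mono (Nat.sub_le k 1))
    have hsenders : ∀ q, delivered ⟨k, hkr⟩ q p → floodW init delivered k q = Wstar :=
      fun q hd => ih hkr.le q (hcons.aliveAtEnd_of_delivered (t := ⟨k, hkr⟩) hk hd)
    calc floodW init delivered (k + 1) p = floodW init delivered k p :=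
          floodW_succ_eq_self init delivered hkr p fun q hd => by rw [hsenders q hd, hp_prev]
      _ = Wstar := hp_prev

/-- Persistence of a common FloodSet set. -/
theorem stmt_7 (n r : ℕ) (hr : 1 ≤ r)
    (V : Type) [Fintype V] [Nonempty V] [LinearOrder V]
    (init : Fin n → V) (crash : Fin n → Option (Fin r))
    (delivered : Fin r → Fin n → Fin n → Prop)
    (hcons : consistentDel crash delivered)
    (m : ℕ) (hm1 : 1 ≤ m) (hmr : m ≤ r) (Wstar : Finset V)
    (hW : ∀ p : Fin n, aliveAtEnd crash (m - 1) p → floodW init delivered m p = Wstar) :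
    ∀ m' : ℕ, m ≤ m' → m' ≤ r →
      ∀ p : Fin n, aliveAtEnd crash (m' - 1) p → floodW init delivered m' p = Wstar :=
  stmt_7_general n r V init crash delivered hcons m hm1 Wstar hW
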